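/- Let H be a complex Hilbert space and let J, J' be antiunitaries on H such that J ∘ T ∘ J⁻¹ = J' ∘ T ∘ J'⁻¹ for every compact operator T on H. Then there exists λ ∈ ℂ with ‖λ‖ = 1 such that J' = λ • J (i.e., J' x = λ • (J x) for all x ∈ H). In particular, an antiunitary implementing a given Real structure on K(H) is unique up to a unimodular scalar. -/

import Mathlib

open scoped ComplexInnerProductSpace
open InnerProductSpace

/-! `V := J⁻¹ ∘ J'` is ℂ-linear on scalars, since the two conjugations cancel, and commutes with
every compact operator, in particular with every rank-one operator; so `V = d • id` and
`J' = J ∘ V = conj d • J`. As `J` and `J'` are both isometric, `|d| = 1`. -/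

section

variable {H : Type*} [NormedAddCommGroup H] [InnerProductSpace ℂ H]

lemma isCompactOperator_rankOne (v u : H) : IsCompactOperator (rankOne ℂ v u) :=
  (isCompactOperator_of_locallyCompactSpace_dom (innerSL ℂ u)).clm_comp
    (ContinuousLinearMap.toSpanSingleton ℂ v)

lemma norm_map_eq_of_inner_map_map {J : H → H} (hJ : ∀ x y : H, ⟪J x, J y⟫ = ⟪y, x⟫) (x : H) :
    ‖J x‖ = ‖x‖ := by
  rw [norm_eq_sqrt_re_inner (𝕜 := ℂ), norm_eq_sqrt_re_inner (𝕜 := ℂ) x, hJ]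

/- Commuting with `rankOne v u` reads `⟪u, V y⟫ • v = ⟪u, y⟫ • V v`: with `u = v = y = x₀ ≠ 0`
it makes `x₀` an eigenvector, and then with `v = x₀` it pins down every `⟪u, V y⟫`. -/
lemma exists_eq_smul_of_commute_rankOne [Nontrivial H] {V : H → H}
    (hsmul : ∀ (a : ℂ) (w : H), V (a • w) = a • V w)
    (hcomm : ∀ v u y : H, rankOne ℂ v u (V y) = V (rankOne ℂ v u y)) :
    ∃ d : ℂ, ∀ y, V y = d • y := by
  have key : ∀ u v y : H, ⟪u, V y⟫ • v = ⟪u, y⟫ • V v := fun u v y => by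
    simpa [hsmul] using hcomm v u y
  obtain ⟨x₀, hx₀⟩ := exists_ne (0 : H)
  have hx₀inner : ⟪x₀, x₀⟫ ≠ 0 := inner_self_ne_zero.mpr hx₀
  obtain ⟨d, hVx₀⟩ : ∃ d : ℂ, V x₀ = d • x₀ :=
    ⟨⟪x₀, x₀⟫⁻¹ * ⟪x₀, V x₀⟫, by rw [mul_smul, key, inv_smul_smul₀ hx₀inner]⟩
  refine ⟨d, fun y => ext_inner_left ℂ fun u => ?_⟩
  have h := key u x₀ y
  rw [hVx₀, smul_smul] at h
  rw [inner_smul_right, mul_comm]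
  exact smul_left_injective ℂ hx₀ h

end

theorem stmt_8_general {H : Type*} [NormedAddCommGroup H] [InnerProductSpace ℂ H]
    (J Jinv J' J'inv : H → H)
    (hJ1 : Function.LeftInverse Jinv J) (hJ2 : Function.RightInverse Jinv J)
    (hJ'1 : Function.LeftInverse J'inv J')
    (hconjJ : ∀ (c : ℂ) (x : H), J (c • x) = (starRingEnd ℂ c) • J x)
    (hinnerJ : ∀ x y : H, ⟪J x, J y⟫ = ⟪y, x⟫)
    (hconjJ' : ∀ (c : ℂ) (x : H), J' (c • x) = (starRingEnd ℂ c) • J' x)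
    (hinnerJ' : ∀ x y : H, ⟪J' x, J' y⟫ = ⟪y, x⟫)
    (hcomm : ∀ T : H →L[ℂ] H, IsCompactOperator T →
      ∀ x : H, J (T (Jinv x)) = J' (T (J'inv x))) :
    ∃ c : ℂ, ‖c‖ = 1 ∧ ∀ x : H, J' x = c • J x := by
  cases subsingleton_or_nontrivial H
  · exact ⟨1, norm_one, fun _ => Subsingleton.elim _ _⟩
  have hV_smul : ∀ (a : ℂ) (w : H), Jinv (J' (a • w)) = a • Jinv (J' w) := fun a w =>
    calc Jinv (J' (a • w)) = Jinv (J (a • Jinv (J' w))) := by rw [hconjJ, hJ2, hconjJ']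
      _ = a • Jinv (J' w) := hJ1 _
  have hV_comm : ∀ v u y : H, rankOne ℂ v u (Jinv (J' y)) = Jinv (J' (rankOne ℂ v u y)) :=
    fun v u y => by
      have h := congrArg Jinv (hcomm _ (isCompactOperator_rankOne v u) (J' y))
      rwa [hJ1, hJ'1] at h
  obtain ⟨d, hd⟩ := exists_eq_smul_of_commute_rankOne hV_smul hV_comm
  have hJ'_eq : ∀ x, J' x = starRingEnd ℂ d • J x := fun x => by rw [← hJ2 (J' x), hd, hconjJ]
  refine ⟨starRingEnd ℂ d, ?_, hJ'_eq⟩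
  obtain ⟨x, hx⟩ := exists_ne (0 : H)
  have h := norm_map_eq_of_inner_map_map hinnerJ' x
  rw [hJ'_eq, norm_smul, norm_map_eq_of_inner_map_map hinnerJ] at h
  exact (mul_eq_right₀ (norm_ne_zero_iff.mpr hx)).mp h

/-- Let `J, J'` be antiunitaries on a complex Hilbert space `H`
(with inverses `Jinv`, `J'inv`) such that `J ∘ T ∘ J⁻¹ = J' ∘ T ∘ J'⁻¹` for every
compact operator `T` on `H`.  Then `J' = λ • J` for some unimodular scalar `λ ∈ ℂ`:
an antiunitary implementing a given Real structure on `K(H)` is unique up to a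
unimodular scalar. -/
theorem stmt_8 {H : Type*} [NormedAddCommGroup H] [InnerProductSpace ℂ H] [CompleteSpace H]
    (J Jinv J' J'inv : H → H)
    (hJ1 : Function.LeftInverse Jinv J) (hJ2 : Function.RightInverse Jinv J)
    (hJ'1 : Function.LeftInverse J'inv J') (hJ'2 : Function.RightInverse J'inv J')
    (haddJ : ∀ x y : H, J (x + y) = J x + J y)
    (hconjJ : ∀ (c : ℂ) (x : H), J (c • x) = (starRingEnd ℂ c) • J x)
    (hinnerJ : ∀ x y : H, ⟪J x, J y⟫ = ⟪y, x⟫)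
    (haddJ' : ∀ x y : H, J' (x + y) = J' x + J' y)
    (hconjJ' : ∀ (c : ℂ) (x : H), J' (c • x) = (starRingEnd ℂ c) • J' x)
    (hinnerJ' : ∀ x y : H, ⟪J' x, J' y⟫ = ⟪y, x⟫)
    (hcomm : ∀ T : H →L[ℂ] H, IsCompactOperator T →
      ∀ x : H, J (T (Jinv x)) = J' (T (J'inv x))) :
    ∃ c : ℂ, ‖c‖ = 1 ∧ ∀ x : H, J' x = c • J x :=
  stmt_8_general J Jinv J' J'inv hJ1 hJ2 hJ'1 hconjJ hinnerJ hconjJ' hinnerJ' hcomm
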